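/- Let $M$ be a compact metric space, $A : M \to M(d,\mathbb{R})$ continuous, $\varphi_A(x,[v]) = \log(\|A(x)v\|/\|v\|)$, and suppose $(m_k)_k$ are Borel probability measures on $M \times \mathbb{P}^{d-1}$ converging weak* to $\tilde m$, with $\int \varphi_A\, dm_k$ uniformly bounded below by some $\gamma > -\infty$ with $m_k(\ker A) = 0$ for all $k$ and $\varphi_A\in L^1(m_k)$. Then $\tilde m(\ker(A)) = 0$. -/

import Mathlib

open Matrix MeasureTheory Filter Topology

variable {V : Type*} [AddCommGroup V] [Module ℝ V] [TopologicalSpace V]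

/-- The quotient topology on real projective space. -/
noncomputable instance : TopologicalSpace (Projectivization ℝ V) :=
  inferInstanceAs (TopologicalSpace (Quotient (projectivizationSetoid ℝ V)))

/-- The Borel σ-algebra on real projective space. -/
noncomputable instance : MeasurableSpace (Projectivization ℝ V) := borel _

instance : BorelSpace (Projectivization ℝ V) := ⟨rfl⟩

/-- `ker(A) = {(x,[v]) : A(x)v = 0}` as a subset of `M × ℙ^{d-1}`. -/
def projKer {M : Type*} {d : ℕ} (A : M → Matrix (Fin d) (Fin d) ℝ) :
    Set (M × Projectivization ℝ (EuclideanSpace ℝ (Fin d))) :=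
  {p | ∀ (v : EuclideanSpace ℝ (Fin d)) (hv : v ≠ 0),
    Projectivization.mk ℝ v hv = p.2 → Matrix.toEuclideanLin (A p.1) v = 0}

/-- `φ_A(x,[v]) = log (‖A(x)v‖ / ‖v‖)`, computed on the normalized representative
(with the junk value `log 0 = 0` on `ker(A)`). -/
noncomputable def phiA {M : Type*} {d : ℕ} (A : M → Matrix (Fin d) (Fin d) ℝ)
    (p : M × Projectivization ℝ (EuclideanSpace ℝ (Fin d))) : ℝ :=
  Real.log ‖Matrix.toEuclideanLin (A p.1) (‖p.2.rep‖⁻¹ • p.2.rep)‖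

section Aux

variable {d : ℕ}

local notation "E" => EuclideanSpace ℝ (Fin d)
local notation "PE" => Projectivization ℝ (EuclideanSpace ℝ (Fin d))

lemma norm_unitRep_mk (v : EuclideanSpace ℝ (Fin d)) (hv : v ≠ 0) :
    ‖(‖v‖ : ℝ)⁻¹ • v‖ = 1 := by
  rw [norm_smul, norm_inv, norm_norm, inv_mul_cancel₀ (norm_ne_zero_iff.2 hv)]

/-- Well-definedness: the value of `‖F (unit rep)‖` computed from any representative. -/
lemma norm_lin_unitRep {F' : Type*} [NormedAddCommGroup F'] [NormedSpace ℝ F']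
    (F : EuclideanSpace ℝ (Fin d) →ₗ[ℝ] F') (q : PE)
    (v : EuclideanSpace ℝ (Fin d)) (hv : v ≠ 0)
    (h : Projectivization.mk ℝ v hv = q) :
    ‖F ((‖q.rep‖ : ℝ)⁻¹ • q.rep)‖ = ‖F v‖ / ‖v‖ := by
  have h2 : Projectivization.mk ℝ q.rep q.rep_nonzero = Projectivization.mk ℝ v hv := by
    rw [h, Projectivization.mk_rep]
  obtain ⟨a, ha⟩ := (Projectivization.mk_eq_mk_iff ℝ _ _ _ _).1 h2
  have hrep : q.rep = (a : ℝ) • v := ha.symm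
  have ha0 : (a : ℝ) ≠ 0 := a.ne_zero
  have hv0 : ‖v‖ ≠ 0 := norm_ne_zero_iff.2 hv
  rw [LinearMap.map_smul, norm_smul, norm_inv, norm_norm, hrep, LinearMap.map_smul, norm_smul, norm_smul]
  rw [Real.norm_eq_abs]
  field_simp

/-- The function `N(x, q) = ‖A(x) (unit rep of q)‖`. -/
noncomputable def nA {M : Type*} (A : M → Matrix (Fin d) (Fin d) ℝ)
    (p : M × PE) : ℝ :=
  ‖Matrix.toEuclideanLin (A p.1) ((‖p.2.rep‖ : ℝ)⁻¹ • p.2.rep)‖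

lemma phiA_eq_log_nA {M : Type*} (A : M → Matrix (Fin d) (Fin d) ℝ) (p : M × PE) :
    phiA A p = Real.log (nA A p) := rfl

lemma nA_mk {M : Type*} (A : M → Matrix (Fin d) (Fin d) ℝ) (x : M)
    (v : EuclideanSpace ℝ (Fin d)) (hv : v ≠ 0) :
    nA A (x, Projectivization.mk ℝ v hv) = ‖Matrix.toEuclideanLin (A x) v‖ / ‖v‖ :=
  norm_lin_unitRep _ _ v hv rfl

lemma projKer_eq_preimage {M : Type*} (A : M → Matrix (Fin d) (Fin d) ℝ) :
    projKer A = nA A ⁻¹' {0} := by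
  ext p
  simp only [projKer, Set.mem_setOf_eq, Set.mem_preimage, Set.mem_singleton_iff]
  constructor
  · intro h
    have h0 := h p.2.rep p.2.rep_nonzero (Projectivization.mk_rep p.2)
    simp [nA, LinearMap.map_smul, h0]
  · intro h v hv hmk
    have h0 : Matrix.toEuclideanLin (A p.1) ((‖p.2.rep‖ : ℝ)⁻¹ • p.2.rep) = 0 :=
      norm_eq_zero.1 h
    have hrep : Matrix.toEuclideanLin (A p.1) p.2.rep = 0 := by
      have : (‖p.2.rep‖ : ℝ) • ((‖p.2.rep‖ : ℝ)⁻¹ • p.2.rep) = p.2.rep :=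
        smul_inv_smul₀ (norm_ne_zero_iff.2 p.2.rep_nonzero) _
      rw [← this, LinearMap.map_smul, h0, smul_zero]
    have h2 : Projectivization.mk ℝ v hv = Projectivization.mk ℝ p.2.rep p.2.rep_nonzero := by
      rw [hmk, Projectivization.mk_rep]
    obtain ⟨a, ha⟩ := (Projectivization.mk_eq_mk_iff ℝ _ _ _ _).1 h2
    rw [← ha, Units.smul_def, LinearMap.map_smul, hrep, smul_zero]

lemma continuous_proj_lift {X : Type*} [TopologicalSpace X] {f : PE → X}
    (h : Continuous fun v : {v : EuclideanSpace ℝ (Fin d) // v ≠ 0} =>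
      f (Projectivization.mk ℝ v.1 v.2)) : Continuous f :=
  (isQuotientMap_quotient_mk' (s := projectivizationSetoid ℝ E)).continuous_iff.mpr h

lemma mk_smul_eq {r : ℝ} (hr : r ≠ 0) (v : EuclideanSpace ℝ (Fin d)) (hv : v ≠ 0)
    (hrv : r • v ≠ 0) :
    Projectivization.mk ℝ (r • v) hrv = Projectivization.mk ℝ v hv :=
  (Projectivization.mk_eq_mk_iff' ℝ _ _ _ _).2 ⟨r, rfl⟩

lemma t2space_projE : T2Space PE := by
  constructor
  intro q q' hne
  set u : EuclideanSpace ℝ (Fin d) := (‖q.rep‖ : ℝ)⁻¹ • q.rep with hu_def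
  have hu0 : u ≠ 0 := by
    simp only [hu_def, smul_ne_zero_iff]
    exact ⟨inv_ne_zero (norm_ne_zero_iff.2 q.rep_nonzero), q.rep_nonzero⟩
  have hu1 : ‖u‖ = 1 := norm_unitRep_mk q.rep q.rep_nonzero
  have hmku : ∀ h, Projectivization.mk ℝ u h = q := by
    intro h
    exact (mk_smul_eq (inv_ne_zero (norm_ne_zero_iff.2 q.rep_nonzero)) q.rep
      q.rep_nonzero h).trans (Projectivization.mk_rep q)
  let T : EuclideanSpace ℝ (Fin d) →ₗ[ℝ] ℝ := (innerSL ℝ u).toLinearMap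
  let f : PE → ℝ := fun p => ‖T ((‖p.rep‖ : ℝ)⁻¹ • p.rep)‖
  have hf : Continuous f := by
    apply continuous_proj_lift
    have heq : (fun v : {v : EuclideanSpace ℝ (Fin d) // v ≠ 0} =>
        f (Projectivization.mk ℝ v.1 v.2)) = fun v => ‖T v.1‖ / ‖v.1‖ := by
      funext v
      exact norm_lin_unitRep T _ v.1 v.2 rfl
    rw [heq]
    exact (continuous_norm.comp ((innerSL ℝ u).continuous.comp continuous_subtype_val)).div
      (continuous_norm.comp continuous_subtype_val) (fun v => norm_ne_zero_iff.2 v.2)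
  have hfq : f q = 1 := by
    have := norm_lin_unitRep T q u hu0 (hmku hu0)
    rw [show f q = ‖T ((‖q.rep‖ : ℝ)⁻¹ • q.rep)‖ from rfl, this]
    have : T u = (1 : ℝ) := by
      simp only [T, ContinuousLinearMap.coe_coe, innerSL_apply_apply]
      rw [real_inner_self_eq_norm_sq, hu1]; norm_num
    rw [this, hu1]; norm_num
  have hfq' : f q' ≠ 1 := by
    intro hcon
    have := norm_lin_unitRep T q' q'.rep q'.rep_nonzero (Projectivization.mk_rep q')
    rw [show f q' = ‖T ((‖q'.rep‖ : ℝ)⁻¹ • q'.rep)‖ from rfl, this] at hcon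
    have hrep0 : ‖q'.rep‖ ≠ 0 := norm_ne_zero_iff.2 q'.rep_nonzero
    have hinner : ‖(inner ℝ u q'.rep : ℝ)‖ = ‖u‖ * ‖q'.rep‖ := by
      have hT : T q'.rep = (inner ℝ u q'.rep : ℝ) := rfl
      rw [hu1, one_mul]
      rw [hT] at hcon
      field_simp at hcon
      exact hcon
    obtain ⟨r, hr0, hr⟩ := (norm_inner_eq_norm_iff hu0 q'.rep_nonzero).1 hinner
    apply hne
    have : Projectivization.mk ℝ q'.rep q'.rep_nonzero = Projectivization.mk ℝ u hu0 :=
      (Projectivization.mk_eq_mk_iff' ℝ _ _ _ _).2 ⟨r, hr.symm⟩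
    rw [← hmku hu0, ← this, Projectivization.mk_rep]
  exact separated_by_continuous hf (by rw [hfq]; exact fun h => hfq' h.symm)

end Aux

section Main

/-- Truncated version of `phiA`. -/
noncomputable def gT {M : Type*} {d : ℕ} (A : M → Matrix (Fin d) (Fin d) ℝ) (n : ℕ)
    (p : M × Projectivization ℝ (EuclideanSpace ℝ (Fin d))) : ℝ :=
  Real.log (max (nA A p) (Real.exp (-(n : ℝ))))

theorem stmt_16' {M : Type*} [MetricSpace M] [CompactSpace M]
    [MeasurableSpace M] [BorelSpace M] (d : ℕ)
    (A : M → Matrix (Fin d) (Fin d) ℝ) (hA : Continuous A)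
    (mk : ℕ → Measure (M × Projectivization ℝ (EuclideanSpace ℝ (Fin d))))
    (mt : Measure (M × Projectivization ℝ (EuclideanSpace ℝ (Fin d))))
    [∀ k, IsProbabilityMeasure (mk k)] [IsProbabilityMeasure mt]
    (hconv : ∀ ψ : C(M × Projectivization ℝ (EuclideanSpace ℝ (Fin d)), ℝ),
      Tendsto (fun k => ∫ p, ψ p ∂(mk k)) atTop (𝓝 (∫ p, ψ p ∂mt)))
    (γ : ℝ) (hγ : ∀ k, γ ≤ ∫ p, phiA A p ∂(mk k))
    (hker : ∀ k, mk k (projKer A) = 0)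
    (hint : ∀ k, Integrable (phiA A) (mk k)) :
    mt (projKer A) = 0 := by
  classical
  rcases isEmpty_or_nonempty (M × Projectivization ℝ (EuclideanSpace ℝ (Fin d))) with hemp | hne
  · exfalso
    have h1 : mt Set.univ = 1 := measure_univ
    have h2 : (Set.univ : Set (M × Projectivization ℝ (EuclideanSpace ℝ (Fin d)))) = ∅ :=
      Set.univ_eq_empty_iff.2 hemp
    rw [h2, measure_empty] at h1
    exact zero_ne_one h1
  haveI hT2 : T2Space (Projectivization ℝ (EuclideanSpace ℝ (Fin d))) := t2space_projE
  -- the matrix-to-CLM linear map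
  let Φ : Matrix (Fin d) (Fin d) ℝ →ₗ[ℝ]
      (EuclideanSpace ℝ (Fin d) →L[ℝ] EuclideanSpace ℝ (Fin d)) :=
    (LinearMap.toContinuousLinearMap.toLinearMap).comp (Matrix.toEuclideanLin.toLinearMap)
  have hΦc : Continuous Φ := Φ.continuous_of_finiteDimensional
  -- the unit sphere and the quotient map π
  let S := Metric.sphere (0 : EuclideanSpace ℝ (Fin d)) 1
  have hSne : ∀ v : S, (v : EuclideanSpace ℝ (Fin d)) ≠ 0 := by
    intro v
    have h1 : ‖(v : EuclideanSpace ℝ (Fin d))‖ = 1 := by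
      have := v.2; rwa [mem_sphere_zero_iff_norm] at this
    intro h; rw [h, norm_zero] at h1; norm_num at h1
  let π : M × S → M × Projectivization ℝ (EuclideanSpace ℝ (Fin d)) :=
    fun p => (p.1, Projectivization.mk ℝ p.2.1 (hSne p.2))
  have hπc : Continuous π := by
    apply continuous_fst.prodMk
    exact (continuous_quotient_mk'
      (s := projectivizationSetoid ℝ (EuclideanSpace ℝ (Fin d)))).comp
      ((continuous_subtype_val.comp continuous_snd).subtype_mk _)
  have hπs : Function.Surjective π := by
    rintro ⟨x, q⟩
    have h0 : ((‖q.rep‖ : ℝ)⁻¹ • q.rep) ∈ S := by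
      rw [mem_sphere_zero_iff_norm]; exact norm_unitRep_mk q.rep q.rep_nonzero
    refine ⟨(x, ⟨_, h0⟩), ?_⟩
    exact Prod.ext rfl ((mk_smul_eq (inv_ne_zero (norm_ne_zero_iff.2 q.rep_nonzero)) q.rep
      q.rep_nonzero _).trans (Projectivization.mk_rep q))
  have hπq : IsQuotientMap π := (hπc.isClosedMap).isQuotientMap hπc hπs
  -- continuity of nA
  have hNc : Continuous (nA A) := by
    rw [hπq.continuous_iff]
    have heq : (nA A) ∘ π = fun p : M × S =>
        ‖Φ (A p.1) (p.2.1 : EuclideanSpace ℝ (Fin d))‖ /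
          ‖(p.2.1 : EuclideanSpace ℝ (Fin d))‖ := by
      funext p
      exact nA_mk A p.1 p.2.1 (hSne p.2)
    rw [heq]
    have hev : Continuous fun p : M × S => Φ (A p.1) (p.2.1 : EuclideanSpace ℝ (Fin d)) :=
      isBoundedBilinearMap_apply.continuous.comp
        ((hΦc.comp (hA.comp continuous_fst)).prodMk
          (continuous_subtype_val.comp continuous_snd))
    exact (continuous_norm.comp hev).div
      (continuous_norm.comp (continuous_subtype_val.comp continuous_snd))
      (fun p => norm_ne_zero_iff.2 (hSne p.2))
  have hNnonneg : ∀ p, 0 ≤ nA A p := fun p => norm_nonneg _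
  -- measurability of the kernel
  have hKm : MeasurableSet (projKer A) := by
    rw [projKer_eq_preimage]
    exact (isClosed_singleton.preimage hNc).measurableSet
  -- uniform bound on nA
  obtain ⟨C0, hC0⟩ := isCompact_univ.exists_bound_of_continuousOn
    (f := fun x : M => Φ (A x)) (hΦc.comp hA).continuousOn
  have hNle : ∀ p, nA A p ≤ C0 := by
    intro p
    have h1 : ‖(‖p.2.rep‖ : ℝ)⁻¹ • p.2.rep‖ = 1 := norm_unitRep_mk _ p.2.rep_nonzero
    calc nA A p = ‖Φ (A p.1) ((‖p.2.rep‖ : ℝ)⁻¹ • p.2.rep)‖ := rfl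
    _ ≤ ‖Φ (A p.1)‖ * ‖(‖p.2.rep‖ : ℝ)⁻¹ • p.2.rep‖ := (Φ (A p.1)).le_opNorm _
    _ = ‖Φ (A p.1)‖ := by rw [h1, mul_one]
    _ ≤ C0 := hC0 p.1 trivial
  set C1 : ℝ := Real.log (max C0 1) with hC1def
  have hC1 : 0 ≤ C1 := Real.log_nonneg (le_max_right _ _)
  -- properties of gT
  have hgpos : ∀ (n : ℕ) p, 0 < max (nA A p) (Real.exp (-(n : ℝ))) :=
    fun n p => lt_max_of_lt_right (Real.exp_pos _)
  have hgc : ∀ n, Continuous (gT A n) :=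
    fun n => (hNc.max continuous_const).log (fun p => (hgpos n p).ne')
  have hglb : ∀ (n : ℕ) p, -(n : ℝ) ≤ gT A n p := by
    intro n p
    calc -(n : ℝ) = Real.log (Real.exp (-(n : ℝ))) := (Real.log_exp _).symm
    _ ≤ _ := Real.log_le_log (Real.exp_pos _) (le_max_right _ _)
  have hgub : ∀ (n : ℕ) p, gT A n p ≤ C1 := by
    intro n p
    apply Real.log_le_log (hgpos n p)
    exact max_le_max (hNle p) (Real.exp_le_one_iff.2 (neg_nonpos.2 n.cast_nonneg))
  have hgint : ∀ (n : ℕ) (μ : Measure (M × Projectivization ℝ (EuclideanSpace ℝ (Fin d)))),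
      IsProbabilityMeasure μ → Integrable (gT A n) μ := by
    intro n μ hμ
    refine ⟨(hgc n).aestronglyMeasurable,
      HasFiniteIntegral.of_bounded (C := max (n : ℝ) C1) (ae_of_all _ fun p => ?_)⟩
    rw [Real.norm_eq_abs]
    refine abs_le.2 ⟨?_, (hgub n p).trans (le_max_right _ _)⟩
    have h1 := hglb n p
    have h2 : -(max (n : ℝ) C1) ≤ -(n : ℝ) := neg_le_neg (le_max_left _ _)
    linarith
  -- step 1 : γ ≤ ∫ gT n d(mk k)
  have hstep1 : ∀ (n : ℕ) k, γ ≤ ∫ p, gT A n p ∂(mk k) := by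
    intro n k
    refine (hγ k).trans (integral_mono_ae (hint k) (hgint n (mk k) inferInstance) ?_)
    have h0 : ∀ᵐ p ∂(mk k), p ∉ projKer A := measure_eq_zero_iff_ae_notMem.mp (hker k)
    filter_upwards [h0] with p hp
    have hnz : nA A p ≠ 0 := by
      intro h; exact hp (by rw [projKer_eq_preimage]; exact h)
    rw [phiA_eq_log_nA]
    exact Real.log_le_log (lt_of_le_of_ne (hNnonneg p) (Ne.symm hnz)) (le_max_left _ _)
  -- step 2 : γ ≤ ∫ gT n d(mt)
  have hstep2 : ∀ (n : ℕ), γ ≤ ∫ p, gT A n p ∂mt :=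
    fun n => ge_of_tendsto' (hconv ⟨gT A n, hgc n⟩) (fun k => hstep1 n k)
  -- step 3 : ∫ gT n d(mt) ≤ (mt K).toReal * (-n) + C1
  set μK : ℝ := (mt (projKer A)).toReal with hμKdef
  have hμKc : (mt (projKer A)ᶜ).toReal ≤ 1 := by
    have h1 : mt (projKer A)ᶜ ≤ 1 := prob_le_one
    calc (mt (projKer A)ᶜ).toReal ≤ (1 : ENNReal).toReal :=
      ENNReal.toReal_mono (by norm_num) h1
    _ = 1 := by norm_num
  have hstep3 : ∀ (n : ℕ), ∫ p, gT A n p ∂mt ≤ μK * (-(n : ℝ)) + C1 := by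
    intro n
    have hint_mt := hgint n mt inferInstance
    rw [← integral_add_compl hKm hint_mt]
    have hKeq : ∫ p in projKer A, gT A n p ∂mt = μK * (-(n : ℝ)) := by
      have hcong : ∫ p in projKer A, gT A n p ∂mt
          = ∫ _ in projKer A, (-(n : ℝ)) ∂mt := by
        refine setIntegral_congr_fun hKm (fun p hp => ?_)
        have h0 : nA A p = 0 := by rw [projKer_eq_preimage] at hp; exact hp
        show Real.log (max (nA A p) (Real.exp (-(n : ℝ)))) = -(n : ℝ)
        rw [h0, max_eq_right (Real.exp_pos _).le, Real.log_exp]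
      rw [hcong, setIntegral_const, smul_eq_mul]; rfl
    have hcompl : ∫ p in (projKer A)ᶜ, gT A n p ∂mt ≤ C1 := by
      calc ∫ p in (projKer A)ᶜ, gT A n p ∂mt ≤ ∫ _ in (projKer A)ᶜ, C1 ∂mt :=
        integral_mono hint_mt.restrict (integrable_const _) (fun p => hgub n p)
      _ = (mt (projKer A)ᶜ).toReal * C1 := by rw [setIntegral_const, smul_eq_mul]; rfl
      _ ≤ C1 := mul_le_of_le_one_left hC1 hμKc
    linarith [hKeq, hcompl]
  -- step 4 : conclude
  by_contra hne0
  have hμKpos : 0 < μK := ENNReal.toReal_pos hne0 (measure_ne_top mt _)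
  obtain ⟨n, hn⟩ := exists_nat_gt ((C1 - γ) / μK)
  have h1 : γ ≤ μK * (-(n : ℝ)) + C1 := (hstep2 n).trans (hstep3 n)
  rw [div_lt_iff₀ hμKpos] at hn
  nlinarith

end Main


theorem stmt_16 {M : Type*} [MetricSpace M] [CompactSpace M]
    [MeasurableSpace M] [BorelSpace M] (d : ℕ)
    (A : M → Matrix (Fin d) (Fin d) ℝ) (hA : Continuous A)
    (mk : ℕ → Measure (M × Projectivization ℝ (EuclideanSpace ℝ (Fin d))))
    (mt : Measure (M × Projectivization ℝ (EuclideanSpace ℝ (Fin d))))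
    [∀ k, IsProbabilityMeasure (mk k)] [IsProbabilityMeasure mt]
    (hconv : ∀ ψ : C(M × Projectivization ℝ (EuclideanSpace ℝ (Fin d)), ℝ),
      Tendsto (fun k => ∫ p, ψ p ∂(mk k)) atTop (𝓝 (∫ p, ψ p ∂mt)))
    (γ : ℝ) (hγ : ∀ k, γ ≤ ∫ p, phiA A p ∂(mk k))
    (hker : ∀ k, mk k (projKer A) = 0)
    (hint : ∀ k, Integrable (phiA A) (mk k)) :
    mt (projKer A) = 0 := stmt_16' d A hA mk mt hconv γ hγ hker hint
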